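/- arXiv:2201.11151 — 7 statements merged into one kernel-verified Lean document; each statement's English description precedes it below -/
import Mathlib

section
/- Let m, n ≥ 2 and let t satisfy 1 ≤ t ≤ ⌈(m+n−2)/2⌉. Then the t-graph Γ(m,n,t) has no isolated vertices, i.e., every vertex has positive degree. -/
/-- The `t`-graph `Γ(m,n,t)`: vertices are `Fin m × Fin n` (the vertex `(i,j)` encoding
`a^i b^j`), and two distinct vertices `(i,j)`, `(k,l)` are adjacent iff
`|i - k| + |j - l| = t` (comparing coordinates as integers). -/
def tGraph (m n t : ℕ) : SimpleGraph (Fin m × Fin n) where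
  Adj x y := x ≠ y ∧ |(x.1 : ℤ) - (y.1 : ℤ)| + |(x.2 : ℤ) - (y.2 : ℤ)| = t
  symm := ⟨by
    rintro x y ⟨h1, h2⟩
    exact ⟨h1.symm, by rw [abs_sub_comm ((y.1 : ℤ)), abs_sub_comm ((y.2 : ℤ))]; exact h2⟩⟩
  loopless := ⟨fun x ⟨h, _⟩ => h rfl⟩

instance (m n t : ℕ) : DecidableRel (tGraph m n t).Adj := fun x y =>
  inferInstanceAs (Decidable (x ≠ y ∧ |(x.1 : ℤ) - (y.1 : ℤ)| + |(x.2 : ℤ) - (y.2 : ℤ)| = t))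

/-!
From a vertex `(i, j)` of the `m × n` grid, the farthest vertex is at ℓ¹-distance
`max i (m-1-i) + max j (n-1-j) ≥ ⌈(m+n-2)/2⌉`, and walking coordinatewise towards it meets every
smaller distance. So for `1 ≤ t ≤ ⌈(m+n-2)/2⌉` some vertex lies at distance exactly `t`.
-/

theorem Fin.exists_abs_sub_eq_of_le_max {m a : ℕ} (i : Fin m) (ha : a ≤ max (i : ℕ) (m - 1 - i)) :
    ∃ k : Fin m, |(i : ℤ) - k| = a := by
  by_cases hup : a ≤ m - 1 - i
  · refine ⟨⟨i + a, by omega⟩, ?_⟩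
    simp
  · refine ⟨⟨i - a, by omega⟩, ?_⟩
    simp only [Nat.cast_sub (show a ≤ (i : ℕ) by omega)]
    simp

theorem ceil_half_le_max_add_max {m n : ℕ} (i : Fin m) (j : Fin n) :
    (m + n - 2 + 1) / 2 ≤ max (i : ℕ) (m - 1 - i) + max (j : ℕ) (n - 1 - j) := by
  omega

theorem exists_grid_dist_eq_of_le {m n d : ℕ} (v : Fin m × Fin n)
    (hd : d ≤ max (v.1 : ℕ) (m - 1 - v.1) + max (v.2 : ℕ) (n - 1 - v.2)) :
    ∃ w : Fin m × Fin n, |(v.1 : ℤ) - w.1| + |(v.2 : ℤ) - w.2| = d := by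
  set M := max (v.1 : ℕ) (m - 1 - v.1)
  obtain ⟨k, hk⟩ := v.1.exists_abs_sub_eq_of_le_max (min_le_right d M)
  obtain ⟨l, hl⟩ := v.2.exists_abs_sub_eq_of_le_max (a := d - min d M) (by omega)
  refine ⟨(k, l), ?_⟩
  rw [hk, hl]
  omega

theorem tGraph_adj_of_grid_dist_eq {m n t : ℕ} (ht : 0 < t) {v w : Fin m × Fin n}
    (h : |(v.1 : ℤ) - w.1| + |(v.2 : ℤ) - w.2| = t) : (tGraph m n t).Adj v w := by
  refine ⟨?_, h⟩
  rintro rfl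
  simp at h
  omega

theorem tGraph_no_isolated_vertices_general (m n t : ℕ) (ht : 1 ≤ t)
    (htub : t ≤ (m + n - 2 + 1) / 2) :
    ∀ v : Fin m × Fin n, 0 < (tGraph m n t).degree v := by
  intro v
  rw [SimpleGraph.degree_pos_iff_exists_adj]
  obtain ⟨w, hw⟩ := exists_grid_dist_eq_of_le v (htub.trans (ceil_half_le_max_add_max v.1 v.2))
  exact ⟨w, tGraph_adj_of_grid_dist_eq ht hw⟩

/-- For `m, n ≥ 2` and `1 ≤ t ≤ ⌈(m + n - 2)/2⌉`, the `t`-graph `Γ(m,n,t)` has no isolated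
vertices: every vertex has positive degree. -/
theorem tGraph_no_isolated_vertices (m n t : ℕ) (hm : 2 ≤ m) (hn : 2 ≤ n) (ht : 1 ≤ t)
    (htub : t ≤ (m + n - 2 + 1) / 2) :
    ∀ v : Fin m × Fin n, 0 < (tGraph m n t).degree v :=
  tGraph_no_isolated_vertices_general m n t ht htub
end

section
/- Let m, n ≥ 2 and let t be an even number with 2 ≤ t ≤ ⌈(m+n−2)/2⌉. Then the t-graph Γ(m,n,t) has exactly 2 connected components. -/
/-!
Since `t` is even, every edge preserves the parity of `i + j`, so there are at least two
components. Conversely, diagonal neighbours `(i, j)` and `(i + 1, j + 1)` have the common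
neighbours `(i + a, j + a - t)` and `(i - b, j + t - b)` (`1 ≤ a ≤ t`, `0 ≤ b < t`), and the
bound `2t ≤ m + n - 1` leaves room in the grid for one of them (symmetrically for
`(i + 1, j - 1)`). Diagonal moves connect all vertices of equal parity.
-/

section Grid

variable {m n : ℕ}

def IsDiagonalStep (v w : Fin m × Fin n) : Prop :=
  (v.1 : ℕ) + 1 = w.1 ∧ ((v.2 : ℕ) + 1 = w.2 ∨ (w.2 : ℕ) + 1 = v.2)

variable {G : SimpleGraph (Fin m × Fin n)}

theorem reachable_zero_mod_two_of_isDiagonalStep (hm : 2 ≤ m)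
    (hG : ∀ v w, IsDiagonalStep v w → G.Reachable v w) :
    ∀ (j : ℕ) (hj : j < n),
      G.Reachable (⟨0, by omega⟩, ⟨j, hj⟩) (⟨0, by omega⟩, ⟨j % 2, by omega⟩)
  | 0, _ => .rfl
  | 1, _ => .rfl
  | j + 2, hj => by
    have up : G.Reachable (⟨0, by omega⟩, ⟨j, by omega⟩) (⟨1, hm⟩, ⟨j + 1, by omega⟩) :=
      hG _ _ ⟨rfl, .inl rfl⟩
    have down : G.Reachable (⟨0, by omega⟩, ⟨j + 2, hj⟩) (⟨1, hm⟩, ⟨j + 1, by omega⟩) :=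
      hG _ _ ⟨rfl, .inr rfl⟩
    simpa using down.trans (up.symm.trans
      (reachable_zero_mod_two_of_isDiagonalStep hm hG j (by omega)))

theorem reachable_base_of_isDiagonalStep (hm : 2 ≤ m) (hn : 2 ≤ n)
    (hG : ∀ v w, IsDiagonalStep v w → G.Reachable v w) :
    ∀ (i : ℕ) (hi : i < m) (j : Fin n),
      G.Reachable (⟨i, hi⟩, j) (⟨0, by omega⟩, ⟨(i + j) % 2, by omega⟩)
  | 0, _, j => by simpa using reachable_zero_mod_two_of_isDiagonalStep hm hG j j.isLt
  | i + 1, hi, j => by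
    obtain ⟨j', hj'⟩ : ∃ j' : Fin n, (j' : ℕ) + 1 = j ∨ (j : ℕ) + 1 = j' := by
      rcases Nat.eq_zero_or_pos (j : ℕ) with hj | hj
      · exact ⟨⟨j + 1, by omega⟩, .inr rfl⟩
      · exact ⟨⟨j - 1, by omega⟩, .inl (by simp only; omega)⟩
    have hmod : (i + j') % 2 = (i + 1 + j) % 2 := by omega
    have step := (hG (⟨i, by omega⟩, j') (⟨i + 1, hi⟩, j) ⟨rfl, hj'⟩).symm
    simpa only [hmod] using step.trans (reachable_base_of_isDiagonalStep hm hn hG i _ j')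

theorem reachable_of_mod_two_eq_of_isDiagonalStep (hm : 2 ≤ m) (hn : 2 ≤ n)
    (hG : ∀ v w, IsDiagonalStep v w → G.Reachable v w) {v w : Fin m × Fin n}
    (h : (v.1 + v.2 : ℕ) % 2 = (w.1 + w.2 : ℕ) % 2) : G.Reachable v w := by
  have hv := reachable_base_of_isDiagonalStep hm hn hG v.1 v.1.isLt v.2
  have hw := reachable_base_of_isDiagonalStep hm hn hG w.1 w.1.isLt w.2
  simp only [h] at hv
  exact hv.trans hw.symm

end Grid

theorem exists_common_neighbor_of_diagonal {m n t : ℕ} {i j j' : ℤ} (ht : 0 < t)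
    (htub : 2 * t ≤ m + n - 1) (hi₀ : 0 ≤ i) (hi₁ : i + 1 < m) (hj₀ : 0 ≤ j) (hj₁ : j < n)
    (hj'₀ : 0 ≤ j') (hj'₁ : j' < n) (hjj' : j' = j + 1 ∨ j' = j - 1) :
    ∃ p q : ℤ, 0 ≤ p ∧ p < m ∧ 0 ≤ q ∧ q < n ∧
      |i - p| + |j - q| = t ∧ |p - (i + 1)| + |q - j'| = t := by
  simp only [abs_eq_max_neg]
  rcases hjj' with rfl | rfl
  · rcases le_or_gt (t : ℤ) (m - 1 - i + j) with h | h
    · exact ⟨i + max 1 (t - j), j - t + max 1 (t - j), by omega⟩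
    · exact ⟨i - max 0 (j + t - (n - 1)), j + t - max 0 (j + t - (n - 1)), by omega⟩
  · rcases le_or_gt (t : ℤ) (m - 1 - i + (n - 1 - j)) with h | h
    · exact ⟨i + max 1 (t - (n - 1 - j)), j + t - max 1 (t - (n - 1 - j)), by omega⟩
    · exact ⟨i - max 0 (t - j), j - t + max 0 (t - j), by omega⟩

section TGraph

variable {m n t : ℕ}

theorem tGraph_adj_of_dist_eq (ht : t ≠ 0) {x y : Fin m × Fin n}
    (h : |(x.1 : ℤ) - (y.1 : ℤ)| + |(x.2 : ℤ) - (y.2 : ℤ)| = t) : (tGraph m n t).Adj x y :=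
  ⟨by rintro rfl; simp only [sub_self, abs_zero, add_zero] at h; omega, h⟩

theorem tGraph_reachable_of_isDiagonalStep (ht : 0 < t) (htub : 2 * t ≤ m + n - 1)
    {v w : Fin m × Fin n} (hvw : IsDiagonalStep v w) : (tGraph m n t).Reachable v w := by
  obtain ⟨hi, hj⟩ := hvw
  obtain ⟨p, q, hp, hp', hq, hq', hvu, huw⟩ :=
    exists_common_neighbor_of_diagonal (i := v.1) (j := v.2) (j' := w.2) ht htub
      (by omega) (by omega) (by omega) (by omega) (by omega) (by omega) (by omega)
  lift p to ℕ using hp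
  lift q to ℕ using hq
  let u : Fin m × Fin n := (⟨p, by omega⟩, ⟨q, by omega⟩)
  have hw1 : ((w.1 : ℕ) : ℤ) = v.1 + 1 := by omega
  exact (tGraph_adj_of_dist_eq (y := u) ht.ne' hvu).reachable.trans
    (tGraph_adj_of_dist_eq (x := u) ht.ne' (by rwa [hw1])).reachable

theorem tGraph_mod_two_eq_of_adj (ht : Even t) {x y : Fin m × Fin n}
    (h : (tGraph m n t).Adj x y) : (x.1 + x.2 : ℕ) % 2 = (y.1 + y.2 : ℕ) % 2 := by
  obtain ⟨-, h⟩ := h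
  obtain ⟨k, rfl⟩ := ht
  simp only [abs_eq_max_neg] at h
  omega

theorem tGraph_mod_two_eq_of_reachable (ht : Even t) {x y : Fin m × Fin n}
    (h : (tGraph m n t).Reachable x y) : (x.1 + x.2 : ℕ) % 2 = (y.1 + y.2 : ℕ) % 2 := by
  obtain ⟨p⟩ := h
  induction p with
  | nil => rfl
  | cons hadj _ ih => exact (tGraph_mod_two_eq_of_adj ht hadj).trans ih

end TGraph

/-- For `m, n ≥ 2` and even `t` with `2 ≤ t ≤ ⌈(m + n - 2)/2⌉`, the `t`-graph `Γ(m,n,t)`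
has exactly 2 connected components. -/
theorem tGraph_even_two_components (m n t : ℕ) (hm : 2 ≤ m) (hn : 2 ≤ n) (hteven : Even t)
    (ht : 2 ≤ t) (htub : t ≤ (m + n - 2 + 1) / 2) :
    Fintype.card (tGraph m n t).ConnectedComponent = 2 := by
  have hdiag : ∀ v w, IsDiagonalStep v w → (tGraph m n t).Reachable v w :=
    fun _ _ => tGraph_reachable_of_isDiagonalStep (by omega) (by omega)
  let parity : (tGraph m n t).ConnectedComponent → Fin 2 :=
    SimpleGraph.ConnectedComponent.lift (fun v => ⟨(v.1 + v.2 : ℕ) % 2, Nat.mod_lt _ two_pos⟩)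
      fun _ _ p _ => Fin.ext (tGraph_mod_two_eq_of_reachable hteven p.reachable)
  have hparity : Function.Bijective parity := by
    refine ⟨fun c d => ?_, fun k =>
      ⟨(tGraph m n t).connectedComponentMk (⟨0, by omega⟩, ⟨k, by omega⟩), ?_⟩⟩
    · induction c, d using SimpleGraph.ConnectedComponent.ind₂ with | _ v w
      exact fun h => SimpleGraph.ConnectedComponent.sound
        (reachable_of_mod_two_eq_of_isDiagonalStep hm hn hdiag (Fin.ext_iff.mp h))
    · ext
      simp only [parity, SimpleGraph.ConnectedComponent.lift_mk]
      omega
  simpa using Fintype.card_congr (Equiv.ofBijective parity hparity)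
end

section
/- Let m, n ≥ 2 and let t be an odd number with 1 ≤ t ≤ ⌈(m+n−2)/2⌉. Then the t-graph Γ(m,n,t) is connected. -/
/-!
For `t = 1`, `Γ(m, n, 1)` is the grid `P_m □ P_n`. For odd `t ≥ 3` we induct on `m + n`: when
`m + n ≥ 2t + 2`, every vertex `(i, n - 1)` of `Γ(m, n, t)` has a neighbour in the copy of
`Γ(m, n - 1, t)` formed by the rows `j < n - 1`.

In the extremal case `m + n = 2t + 1` with `m ≤ t`, call the rows `j ≤ t - m + 1` low. The move
`(±1, t - 1)` followed by `(0, -t)` carries a low vertex diagonally one row down, so all low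
vertices with the same parity of `i + j` lie in one component. Since `t` is odd, the edge from
`(0, 0)` to `(m - 1, t - m + 1)` joins the two parity classes, and every other vertex is one or two
moves away from a low row.
-/

open SimpleGraph

lemma Int.abs_natCast_sub_natCast (a b : ℕ) : |(a : ℤ) - b| = a.dist b := by
  rw [abs_eq (Int.natCast_nonneg _)]; unfold Nat.dist; omega

lemma exists_fin_prod_val_eq {m n i j : ℕ} (hi : i < m) (hj : j < n) :
    ∃ z : Fin m × Fin n, (z.1 : ℕ) = i ∧ (z.2 : ℕ) = j :=
  ⟨(⟨i, hi⟩, ⟨j, hj⟩), rfl, rfl⟩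

lemma SimpleGraph.Connected.of_hom_of_forall_reachable {V W : Type*} {G : SimpleGraph V}
    {H : SimpleGraph W} (hG : G.Connected) (f : G →g H) (hf : ∀ w, ∃ v, H.Reachable (f v) w) :
    H.Connected :=
  have : Nonempty W := hG.nonempty.map f
  ⟨fun u w => by
    obtain ⟨v, hv⟩ := hf u
    obtain ⟨v', hv'⟩ := hf w
    exact hv.symm.trans (((hG v v').map f).trans hv')⟩

section

variable {m n t : ℕ}

lemma tGraph_adj_iff_of_pos (ht : 0 < t) {x y : Fin m × Fin n} :
    (tGraph m n t).Adj x y ↔ Nat.dist x.1 y.1 + Nat.dist x.2 y.2 = t := by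
  have key : |(x.1 : ℤ) - y.1| + |(x.2 : ℤ) - y.2| = t ↔
      Nat.dist x.1 y.1 + Nat.dist x.2 y.2 = t := by
    rw [Int.abs_natCast_sub_natCast, Int.abs_natCast_sub_natCast]; norm_cast
  refine ⟨fun h => key.1 h.2, fun h => ⟨?_, key.2 h⟩⟩
  rintro rfl
  simp only [Nat.dist_self, add_zero] at h
  omega

def tGraphSwapIso (m n t : ℕ) : tGraph m n t ≃g tGraph n m t where
  toEquiv := Equiv.prodComm (Fin m) (Fin n)
  map_rel_iff' := by simp [tGraph, add_comm]

lemma tGraph_connected_comm : (tGraph m n t).Connected ↔ (tGraph n m t).Connected :=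
  (tGraphSwapIso m n t).connected_iff

def tGraphCastSuccHom (m n t : ℕ) : tGraph m n t →g tGraph m (n + 1) t where
  toFun := Prod.map id Fin.castSucc
  map_rel' h := ⟨by simpa [Prod.ext_iff] using h.1, by simpa using h.2⟩

lemma tGraph_one_eq_boxProd : tGraph m n 1 = pathGraph m □ pathGraph n := by
  ext x y
  rw [tGraph_adj_iff_of_pos one_pos, boxProd_adj, pathGraph_adj, pathGraph_adj]
  simp only [Fin.ext_iff]
  unfold Nat.dist
  omega

lemma tGraph_one_connected (hm : 0 < m) (hn : 0 < n) : (tGraph m n 1).Connected := by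
  obtain ⟨m, rfl⟩ := Nat.exists_eq_add_of_lt hm
  obtain ⟨n, rfl⟩ := Nat.exists_eq_add_of_lt hn
  rw [tGraph_one_eq_boxProd]
  exact (pathGraph_connected _).boxProd (pathGraph_connected _)

lemma tGraph_connected_succ_right (ht : 0 < t) (hn : 0 < n) (hmn : 2 * t + 1 ≤ m + n)
    (h : (tGraph m n t).Connected) : (tGraph m (n + 1) t).Connected := by
  refine h.of_hom_of_forall_reachable (tGraphCastSuccHom m n t) fun x => ?_
  by_cases hx : (x.2 : ℕ) < n
  · exact ⟨(x.1, ⟨x.2, hx⟩), by rfl⟩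
  suffices h : ∃ i j, (tGraph m (n + 1) t).Adj x (i, Fin.castSucc j) by
    obtain ⟨i, j, hij⟩ := h
    exact ⟨(i, j), hij.symm.reachable⟩
  have := x.1.isLt
  have hadj {i : Fin m} {j : Fin n} (h : Nat.dist x.1 i + Nat.dist x.2 j = t) :
      (tGraph m (n + 1) t).Adj x (i, Fin.castSucc j) :=
    (tGraph_adj_iff_of_pos ht).2 (by simpa using h)
  by_cases htn : t ≤ n
  · exact ⟨x.1, ⟨n - t, by omega⟩, hadj (by simp only [Nat.dist]; omega)⟩
  by_cases hs : t - n ≤ x.1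
  · exact ⟨⟨x.1 - (t - n), by omega⟩, ⟨0, hn⟩, hadj (by simp only [Nat.dist]; omega)⟩
  · exact ⟨⟨x.1 + (t - n), by omega⟩, ⟨0, hn⟩, hadj (by simp only [Nat.dist]; omega)⟩

lemma tGraph_reachable_of_descend (hmn : m + n = 2 * t + 1) {x y : Fin m × Fin n}
    (hx : (x.2 : ℕ) + m ≤ t + 1) (hxy₂ : (y.2 : ℕ) + 1 = x.2)
    (hxy₁ : (x.1 : ℕ) + 1 = y.1 ∨ (y.1 : ℕ) + 1 = x.1) : (tGraph m n t).Reachable x y := by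
  have ht : 0 < t := by omega
  obtain ⟨z, hz₁, hz₂⟩ := exists_fin_prod_val_eq y.1.isLt (show y.2 + t < n by omega)
  have hxz : (tGraph m n t).Adj x z := (tGraph_adj_iff_of_pos ht).2 (by unfold Nat.dist; omega)
  have hzy : (tGraph m n t).Adj z y := (tGraph_adj_iff_of_pos ht).2 (by unfold Nat.dist; omega)
  exact hxz.reachable.trans hzy.reachable

lemma tGraph_reachable_of_row_zero (hmn : m + n = 2 * t + 1) (hmt : m ≤ t)
    {x y : Fin m × Fin n} (hx : (x.2 : ℕ) = 0) (hy : (y.2 : ℕ) = 0)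
    (hxy : (x.1 : ℕ) % 2 = y.1 % 2) : (tGraph m n t).Reachable x y := by
  wlog hle : (x.1 : ℕ) ≤ y.1 generalizing x y
  · exact (this hy hx hxy.symm (by omega)).symm
  obtain ⟨k, hk⟩ : ∃ k, (y.1 : ℕ) = x.1 + 2 * k := ⟨(y.1 - x.1) / 2, by omega⟩
  induction k generalizing y with
  | zero =>
    obtain rfl : x = y := Prod.ext (Fin.ext (by omega)) (Fin.ext (by omega))
    rfl
  | succ k ih =>
    have := y.1.isLt
    obtain ⟨z, hz₁, hz₂⟩ := exists_fin_prod_val_eq (show x.1 + 2 * k < m by omega)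
      (show 0 < n by omega)
    obtain ⟨w, hw₁, hw₂⟩ := exists_fin_prod_val_eq (show x.1 + 2 * k + 1 < m by omega)
      (show 1 < n by omega)
    have hxz : (tGraph m n t).Reachable x z := ih hz₂ (by omega) (by omega) hz₁
    have hwz := tGraph_reachable_of_descend hmn (x := w) (y := z) (by omega) (by omega) (by omega)
    have hwy := tGraph_reachable_of_descend hmn (x := w) (y := y) (by omega) (by omega) (by omega)
    exact hxz.trans (hwz.symm.trans hwy)

lemma tGraph_exists_reachable_row_zero (hmn : m + n = 2 * t + 1) (hm : 2 ≤ m)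
    (x : Fin m × Fin n) (hx : (x.2 : ℕ) + m ≤ t + 1) :
    ∃ y : Fin m × Fin n, (y.2 : ℕ) = 0 ∧ (y.1 : ℕ) % 2 = (x.1 + x.2) % 2 ∧
      (tGraph m n t).Reachable x y := by
  obtain ⟨j, hj⟩ : ∃ j, (x.2 : ℕ) = j := ⟨_, rfl⟩
  induction j generalizing x with
  | zero => exact ⟨x, hj, by omega, .rfl⟩
  | succ j ih =>
    obtain ⟨i, hi⟩ : ∃ i, i < m ∧ ((x.1 : ℕ) + 1 = i ∨ i + 1 = x.1) :=
      if h : (x.1 : ℕ) + 1 < m then ⟨_, h, .inl rfl⟩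
      else ⟨x.1 - 1, by omega, .inr (by omega)⟩
    obtain ⟨x', hx'₁, hx'₂⟩ := exists_fin_prod_val_eq hi.1 (show j < n by omega)
    obtain ⟨y, hy₀, hy, hx'y⟩ := ih x' (by omega) hx'₂
    exact ⟨y, hy₀, by omega,
      (tGraph_reachable_of_descend hmn hx (by omega) (by omega)).trans hx'y⟩

lemma tGraph_reachable_of_low (hmn : m + n = 2 * t + 1) (hm : 2 ≤ m) (hmt : m ≤ t)
    (hodd : Odd t) {x y : Fin m × Fin n} (hx : (x.2 : ℕ) + m ≤ t + 1)
    (hy : (y.2 : ℕ) + m ≤ t + 1) : (tGraph m n t).Reachable x y := by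
  obtain ⟨o, ho₁, ho₂⟩ := exists_fin_prod_val_eq (show 0 < m by omega) (show 0 < n by omega)
  obtain ⟨b, hb₁, hb₂⟩ := exists_fin_prod_val_eq (show m - 1 < m by omega)
    (show t - m + 1 < n by omega)
  have hob : (tGraph m n t).Adj o b :=
    (tGraph_adj_iff_of_pos (by omega)).2 (by unfold Nat.dist; omega)
  obtain ⟨b', hb'₀, hb', hbb'⟩ := tGraph_exists_reachable_row_zero hmn hm b (by omega)
  have hb'_odd : (b'.1 : ℕ) % 2 = 1 := by obtain ⟨k, rfl⟩ := hodd; omega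
  suffices ho : ∀ z : Fin m × Fin n, (z.2 : ℕ) + m ≤ t + 1 → (tGraph m n t).Reachable o z
    from (ho x hx).symm.trans (ho y hy)
  intro z hz
  obtain ⟨z', hz'₀, -, hzz'⟩ := tGraph_exists_reachable_row_zero hmn hm z hz
  refine .trans ?_ hzz'.symm
  rcases Nat.mod_two_eq_zero_or_one z'.1 with h | h
  · exact tGraph_reachable_of_row_zero hmn hmt ho₂ hz'₀ (by omega)
  · exact hob.reachable.trans
      (hbb'.trans (tGraph_reachable_of_row_zero hmn hmt hb'₀ hz'₀ (by omega)))

lemma tGraph_exists_reachable_low (hmn : m + n = 2 * t + 1) (hmt : m ≤ t)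
    (x : Fin m × Fin n) :
    ∃ y : Fin m × Fin n, (y.2 : ℕ) + m ≤ t + 1 ∧ (tGraph m n t).Reachable x y := by
  have := x.1.isLt
  have ht : 0 < t := by omega
  have hdown (z : Fin m × Fin n) (hz : t ≤ z.2) :
      ∃ y : Fin m × Fin n, (y.2 : ℕ) + m ≤ t + 1 ∧ (tGraph m n t).Reachable z y := by
    obtain ⟨y, hy₁, hy₂⟩ := exists_fin_prod_val_eq z.1.isLt (show z.2 - t < n by omega)
    exact ⟨y, by omega, ((tGraph_adj_iff_of_pos ht).2 (by unfold Nat.dist; omega)).reachable⟩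
  by_cases hlow : (x.2 : ℕ) + m ≤ t + 1
  · exact ⟨x, hlow, .rfl⟩
  by_cases hhigh : t ≤ x.2
  · exact hdown x hhigh
  by_cases hleft : t - x.2 ≤ x.1
  · obtain ⟨y, hy₁, hy₂⟩ := exists_fin_prod_val_eq (show x.1 - (t - x.2) < m by omega)
      (show 0 < n by omega)
    exact ⟨y, by omega, ((tGraph_adj_iff_of_pos ht).2 (by unfold Nat.dist; omega)).reachable⟩
  · obtain ⟨z, hz₁, hz₂⟩ :=
      exists_fin_prod_val_eq (show x.1 + (m - (t - x.2)) < m by omega) (show n - 1 < n by omega)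
    have hxz : (tGraph m n t).Adj x z :=
      (tGraph_adj_iff_of_pos ht).2 (by unfold Nat.dist; omega)
    obtain ⟨y, hy, hzy⟩ := hdown z (by omega)
    exact ⟨y, hy, hxz.reachable.trans hzy⟩

lemma tGraph_connected_of_add_eq (hmn : m + n = 2 * t + 1) (hm : 2 ≤ m) (hmt : m ≤ t)
    (hodd : Odd t) : (tGraph m n t).Connected := by
  obtain ⟨o, -⟩ := exists_fin_prod_val_eq (show 0 < m by omega) (show 0 < n by omega)
  refine (connected_iff_exists_forall_reachable _).2 ⟨o, fun x => ?_⟩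
  obtain ⟨o', ho', hoo'⟩ := tGraph_exists_reachable_low hmn hmt o
  obtain ⟨x', hx', hxx'⟩ := tGraph_exists_reachable_low hmn hmt x
  exact hoo'.trans ((tGraph_reachable_of_low hmn hm hmt hodd ho' hx').trans hxx'.symm)

lemma tGraph_connected_of_le (ht : 2 ≤ t) (hodd : Odd t) (hm : 2 ≤ m) (hn : 2 ≤ n)
    (hmn : 2 * t + 1 ≤ m + n) : (tGraph m n t).Connected := by
  obtain ⟨k, hk⟩ := Nat.exists_eq_add_of_le hmn
  clear hmn
  induction k generalizing m n with
  | zero =>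
    rcases le_or_gt m t with hmt | htm
    · exact tGraph_connected_of_add_eq hk hm hmt hodd
    · exact tGraph_connected_comm.2 (tGraph_connected_of_add_eq (by omega) hn (by omega) hodd)
  | succ k ih =>
    by_cases hn₃ : 3 ≤ n
    · obtain ⟨n, rfl⟩ : ∃ n', n = n' + 1 := ⟨n - 1, by omega⟩
      exact tGraph_connected_succ_right (by omega) (by omega) (by omega)
        (ih hm (by omega) (by omega))
    · obtain ⟨m, rfl⟩ : ∃ m', m = m' + 1 := ⟨m - 1, by omega⟩
      refine tGraph_connected_comm.2
        (tGraph_connected_succ_right (by omega) (by omega) (by omega) ?_)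
      exact tGraph_connected_comm.2 (ih (by omega) hn (by omega))

end

theorem tGraph_odd_connected_general (m n t : ℕ) (hm : 2 ≤ m) (hn : 2 ≤ n) (htodd : Odd t)
    (htub : t ≤ (m + n - 2 + 1) / 2) :
    (tGraph m n t).Connected := by
  obtain rfl | ht : t = 1 ∨ 2 ≤ t := by have := htodd.pos; omega
  · exact tGraph_one_connected (by omega) (by omega)
  · exact tGraph_connected_of_le ht htodd hm hn (by omega)

/-- For `m, n ≥ 2` and odd `t` with `1 ≤ t ≤ ⌈(m + n - 2)/2⌉`, the `t`-graph `Γ(m,n,t)`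
is connected. -/
theorem tGraph_odd_connected (m n t : ℕ) (hm : 2 ≤ m) (hn : 2 ≤ n) (htodd : Odd t)
    (ht : 1 ≤ t) (htub : t ≤ (m + n - 2 + 1) / 2) :
    (tGraph m n t).Connected :=
  tGraph_odd_connected_general m n t hm hn htodd htub
end

section
/- For every n ≥ 2 and every t with 2 ≤ t ≤ n, the t-graph Γ(2,n,t) of the dihedral group D_n has exactly 4(n − t) + 2 edges. -/
/-!
Counting ordered pairs, `2 · #E` is the sum over the four row pairs `(i, k)` of the number of
column pairs `(j, l)` with `|j - l| = t - |i - k|`. In `Fin n` there are `2 (n - d)` ordered pairs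
at distance `d > 0`, so `2 · #E = 2 · 2 (n - t) + 2 · 2 (n - t + 1)`.
-/

open Finset

lemma card_filter_val_sub_eq (n d : ℕ) :
    #{p : Fin n × Fin n | (p.1 : ℤ) - p.2 = d} = n - d := by
  rw [← Fintype.card_fin (n - d)]
  refine card_bij (fun p hp => ⟨p.2, ?_⟩) (fun _ _ => mem_univ _) ?_ ?_
  · simp only [mem_filter, mem_univ, true_and] at hp
    omega
  · simp only [mem_filter, mem_univ, true_and, Fin.mk.injEq]
    intro p hp q hq h
    ext <;> omega
  · intro l _
    exact ⟨(⟨l + d, by omega⟩, ⟨l, by omega⟩), by simp, rfl⟩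

lemma card_filter_abs_val_sub_eq (n : ℕ) {d : ℕ} (hd : 0 < d) :
    #{p : Fin n × Fin n | |(p.1 : ℤ) - p.2| = d} = 2 * (n - d) := by
  have hsplit (p : Fin n × Fin n) :
      |(p.1 : ℤ) - p.2| = d ↔ (p.1 : ℤ) - p.2 = d ∨ (p.2 : ℤ) - p.1 = d := by
    rw [abs_eq (by positivity)]
    omega
  have hswap : #{p : Fin n × Fin n | (p.2 : ℤ) - p.1 = d} = n - d := by
    rw [← card_filter_val_sub_eq n d]
    exact card_equiv (Equiv.prodComm _ _) (by simp)
  simp only [hsplit, filter_or]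
  rw [card_union_of_disjoint (disjoint_filter.2 fun p _ h₁ h₂ => by omega),
    card_filter_val_sub_eq, hswap, two_mul]

lemma card_filter_add_abs_val_sub_eq (n : ℕ) {c t : ℤ} (hct : c < t) :
    #{p : Fin n × Fin n | c + |(p.1 : ℤ) - p.2| = t} = 2 * (n - (t - c).toNat) := by
  rw [← card_filter_abs_val_sub_eq n (d := (t - c).toNat) (by omega)]
  congr 1
  exact filter_congr fun p _ => by omega

lemma tGraph_adj_iff {m n t : ℕ} (ht : t ≠ 0) {x y : Fin m × Fin n} :
    (tGraph m n t).Adj x y ↔ |(x.1 : ℤ) - y.1| + |(x.2 : ℤ) - y.2| = t :=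
  ⟨And.right, fun h => ⟨by rintro rfl; simp at h; omega, h⟩⟩

lemma two_mul_card_edgeFinset_tGraph (m n : ℕ) {t : ℕ} (ht : t ≠ 0) :
    2 * #(tGraph m n t).edgeFinset = ∑ q : Fin m × Fin m,
      #{p : Fin n × Fin n | |(q.1 : ℤ) - q.2| + |(p.1 : ℤ) - p.2| = t} := by
  rw [SimpleGraph.two_mul_card_edgeFinset]
  simp only [card_filter]
  rw [← Fintype.sum_prod_type', ← (Equiv.prodProdProdComm _ _ _ _).sum_comp]
  exact Fintype.sum_congr _ _ fun _ => if_congr (tGraph_adj_iff ht) rfl rfl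

theorem dihedral_tGraph_card_edges_general (n t : ℕ) (ht : 2 ≤ t) (htn : t ≤ n) :
    (tGraph 2 n t).edgeFinset.card = 4 * (n - t) + 2 := by
  have fibre (q : Fin 2 × Fin 2) :
      #{p : Fin n × Fin n | |(q.1 : ℤ) - q.2| + |(p.1 : ℤ) - p.2| = t} =
        2 * (n - (t - |(q.1 : ℤ) - q.2|).toNat) :=
    card_filter_add_abs_val_sub_eq n (abs_sub_lt_iff.2 ⟨by omega, by omega⟩)
  have h := two_mul_card_edgeFinset_tGraph 2 n (t := t) (by omega)
  simp only [fibre, Fintype.sum_prod_type, Fin.sum_univ_two] at h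
  norm_num at h
  omega

/-- For `n ≥ 2` and `2 ≤ t ≤ n`, the `t`-graph `Γ(2,n,t)` of the dihedral group `D_n` has
exactly `4(n - t) + 2` edges. -/
theorem dihedral_tGraph_card_edges (n t : ℕ) (hn : 2 ≤ n) (ht : 2 ≤ t) (htn : t ≤ n) :
    (tGraph 2 n t).edgeFinset.card = 4 * (n - t) + 2 :=
  dihedral_tGraph_card_edges_general n t ht htn
end

section
/- Let n ≥ 2 and let t be an even number with 2 ≤ t ≤ ⌈n/2⌉. Then the t-graph Γ(2,n,t) of the dihedral group D_n has exactly 2 connected components, and these components are isomorphic: the map (i,j) ↦ (i+1, j) (addition in Fin 2, i.e., swapping the two rows) is a graph automorphism of Γ(2,n,t) that sends every vertex to a vertex lying in the other connected component. -/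
/-!
For even `t` every edge of `Γ(m,n,t)` joins two vertices of the same colour in the checkerboard
colouring `(i + j) mod 2`. Reflecting the rows of a grid with an even number of rows changes the
colour, so it never maps a vertex into its own component. Conversely, when `2t ≤ n + 1` the
vertices `(i, j + 1)` and `(i + 1, j)` of `Γ(2,n,t)` always have a common neighbour, so every vertex
is joined to the column `j = 0`, and the two colour classes are exactly the two components.
-/

namespace tGraph

def parity {m n : ℕ} (v : Fin m × Fin n) : ZMod 2 := ((v.1 : ℕ) + (v.2 : ℕ) : ℕ)

variable {m n t : ℕ}

theorem parity_eq_of_adj (hte : Even t) {v w : Fin m × Fin n} (h : (tGraph m n t).Adj v w) :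
    parity v = parity w := by
  obtain ⟨s, rfl⟩ := hte
  obtain ⟨-, hvw⟩ := h
  rw [parity, parity, ZMod.natCast_eq_natCast_iff']
  rcases abs_cases ((v.1 : ℤ) - w.1) with ⟨h1, -⟩ | ⟨h1, -⟩ <;>
    rcases abs_cases ((v.2 : ℤ) - w.2) with ⟨h2, -⟩ | ⟨h2, -⟩ <;> omega

theorem parity_eq_of_reachable (hte : Even t) {v w : Fin m × Fin n}
    (h : (tGraph m n t).Reachable v w) : parity v = parity w := by
  obtain ⟨p⟩ := h
  induction p with
  | nil => rfl
  | cons hadj _ ih => exact (parity_eq_of_adj hte hadj).trans ih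

def componentParity (hte : Even t) : (tGraph m n t).ConnectedComponent → ZMod 2 :=
  SimpleGraph.ConnectedComponent.lift parity fun _ _ p _ => parity_eq_of_reachable hte p.reachable

def rowReflection : tGraph m n t ≃g tGraph m n t where
  toEquiv := Fin.revPerm.prodCongr (Equiv.refl _)
  map_rel_iff' {v w} := by
    obtain ⟨i, j⟩ := v
    obtain ⟨k, l⟩ := w
    have hrev : |((i.rev : ℕ) : ℤ) - (k.rev : ℕ)| = |(i : ℤ) - k| := by
      rw [abs_sub_comm]; congr 1; simp only [Fin.val_rev]; omega
    change ((i.rev, j) ≠ (k.rev, l) ∧ |((i.rev : ℕ) : ℤ) - (k.rev : ℕ)| + |(j : ℤ) - l| = t) ↔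
      ((i, j) ≠ (k, l) ∧ |(i : ℤ) - k| + |(j : ℤ) - l| = t)
    rw [hrev, ne_eq, ne_eq, Prod.mk.injEq, Prod.mk.injEq, Fin.rev_inj]

theorem rowReflection_apply (v : Fin m × Fin n) :
    (rowReflection : tGraph m n t ≃g tGraph m n t) v = (v.1.rev, v.2) := rfl

theorem parity_rev_fst (v : Fin m × Fin n) : parity (v.1.rev, v.2) = parity v + (m - 1 : ℕ) := by
  obtain ⟨i, j⟩ := v
  rw [parity, parity, ← Nat.cast_add, ZMod.natCast_eq_natCast_iff']
  simp only [Fin.val_rev]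
  omega

theorem not_reachable_rowReflection (hm : Even m) (hte : Even t) (v : Fin m × Fin n) :
    ¬(tGraph m n t).Reachable (rowReflection (t := t) v) v := by
  intro h
  have hpar := parity_eq_of_reachable hte h
  rw [rowReflection_apply, parity_rev_fst, add_eq_left, ZMod.natCast_eq_zero_iff_even] at hpar
  have := v.1.pos
  obtain ⟨a, ha⟩ := hm
  obtain ⟨b, hb⟩ := hpar
  omega

theorem fin_two_rev_eq_add_one (i : Fin 2) : i.rev = i + 1 := by fin_cases i <;> rfl

theorem adj_of_snd_add_eq (i : Fin m) {j l : Fin n} (ht : 0 < t) (h : (j : ℕ) + t = l) :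
    (tGraph m n t).Adj (i, j) (i, l) := by
  refine ⟨fun hjl => by simp_all, ?_⟩
  simp only [sub_self, abs_zero, zero_add]
  rw [abs_sub_comm, abs_of_nonneg] <;> omega

theorem adj_add_one_fst_of_snd_add_eq (i : Fin 2) {j l : Fin n} (ht : 0 < t)
    (h : (j : ℕ) + t = l + 1) : (tGraph 2 n t).Adj (i, j) (i + 1, l) := by
  refine ⟨fun hil => by fin_cases i <;> simp_all, ?_⟩
  have hi : |(i : ℤ) - ((i + 1 : Fin 2) : ℕ)| = 1 := by fin_cases i <;> rfl
  simp only
  rw [hi, abs_sub_comm, abs_of_nonneg] <;> omega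

-- `(i, j + 1)` and `(i + 1, j)` have the common neighbour `(i, j + 1 - t)` or `(i + 1, j + t)`;
-- the latter is a vertex when `j + 1 < t` because `2 * t ≤ n + 1`.
theorem reachable_succ_snd_add_one_fst (ht : 0 < t) (htn : 2 * t ≤ n + 1) (i : Fin 2) {j : ℕ}
    (hj : j + 1 < n) : (tGraph 2 n t).Reachable (i, ⟨j + 1, hj⟩) (i + 1, ⟨j, by omega⟩) := by
  by_cases hjt : t ≤ j + 1
  · have h1 : (tGraph 2 n t).Adj (i, ⟨j + 1 - t, by omega⟩) (i, ⟨j + 1, hj⟩) :=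
      adj_of_snd_add_eq i ht (by dsimp only; omega)
    have h2 : (tGraph 2 n t).Adj (i, ⟨j + 1 - t, by omega⟩) (i + 1, ⟨j, by omega⟩) :=
      adj_add_one_fst_of_snd_add_eq i ht (by dsimp only; omega)
    exact h1.symm.reachable.trans h2.reachable
  · have h1 : (tGraph 2 n t).Adj (i, ⟨j + 1, hj⟩) (i + 1, ⟨j + t, by omega⟩) :=
      adj_add_one_fst_of_snd_add_eq i ht (by dsimp only; omega)
    have h2 : (tGraph 2 n t).Adj (i + 1, ⟨j, by omega⟩) (i + 1, ⟨j + t, by omega⟩) :=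
      adj_of_snd_add_eq (i + 1) ht rfl
    exact h1.reachable.trans h2.symm.reachable

theorem exists_reachable_snd_eq_zero (ht : 0 < t) (htn : 2 * t ≤ n + 1) (v : Fin 2 × Fin n) :
    ∃ i, (tGraph 2 n t).Reachable v (i, ⟨0, v.2.pos⟩) := by
  obtain ⟨i, j, hj⟩ := v
  induction j generalizing i with
  | zero => exact ⟨i, .rfl⟩
  | succ j ih =>
    obtain ⟨k, hk⟩ := ih (i + 1) (by omega)
    exact ⟨k, (reachable_succ_snd_add_one_fst ht htn i hj).trans hk⟩

theorem reachable_iff_parity_eq (hte : Even t) (ht : 0 < t) (htn : 2 * t ≤ n + 1)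
    {v w : Fin 2 × Fin n} : (tGraph 2 n t).Reachable v w ↔ parity v = parity w := by
  refine ⟨parity_eq_of_reachable hte, fun hvw => ?_⟩
  obtain ⟨i, hv⟩ := exists_reachable_snd_eq_zero ht htn v
  obtain ⟨k, hw⟩ := exists_reachable_snd_eq_zero ht htn w
  have hik : i = k := by
    have hpar := (parity_eq_of_reachable hte hv).symm.trans
      (hvw.trans (parity_eq_of_reachable hte hw))
    rw [parity, parity, ZMod.natCast_eq_natCast_iff'] at hpar
    exact Fin.ext (by simp only at hpar; omega)
  subst hik
  exact hv.trans hw.symm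

theorem card_connectedComponent_eq_two (hte : Even t) (ht : 0 < t) (htn : 2 * t ≤ n + 1) :
    Fintype.card (tGraph 2 n t).ConnectedComponent = 2 := by
  have hn : 0 < n := by omega
  rw [← ZMod.card 2]
  refine Fintype.card_of_bijective (f := componentParity hte) ⟨?_, fun p => ?_⟩
  · refine SimpleGraph.ConnectedComponent.ind₂ fun v w hvw => ?_
    exact SimpleGraph.ConnectedComponent.sound ((reachable_iff_parity_eq hte ht htn).2 hvw)
  · refine ⟨(tGraph 2 n t).connectedComponentMk (⟨p.val, p.val_lt⟩, ⟨0, hn⟩), ?_⟩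
    change ((p.val + 0 : ℕ) : ZMod 2) = p
    rw [add_zero, ZMod.natCast_zmod_val]

end tGraph

theorem dihedral_tGraph_even_two_isomorphic_components_general (n t : ℕ)
    (hteven : Even t) (ht : 2 ≤ t) (htub : t ≤ (n + 1) / 2) :
    Fintype.card (tGraph 2 n t).ConnectedComponent = 2 ∧
      ∃ e : tGraph 2 n t ≃g tGraph 2 n t,
        (∀ v : Fin 2 × Fin n, e v = (v.1 + 1, v.2)) ∧
        ∀ v : Fin 2 × Fin n,
          (tGraph 2 n t).connectedComponentMk (e v) ≠
            (tGraph 2 n t).connectedComponentMk v := by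
  refine ⟨tGraph.card_connectedComponent_eq_two hteven (by omega) (by omega),
    tGraph.rowReflection, fun v => ?_, fun v h => ?_⟩
  · rw [tGraph.rowReflection_apply, tGraph.fin_two_rev_eq_add_one]
  · exact tGraph.not_reachable_rowReflection even_two hteven v
      (SimpleGraph.ConnectedComponent.exact h)

/-- For `n ≥ 2` and even `t` with `2 ≤ t ≤ ⌈n/2⌉`, the `t`-graph `Γ(2,n,t)` of the
dihedral group `D_n` has exactly 2 connected components, and these are isomorphic: the
row-swapping map `(i,j) ↦ (i+1, j)` is a graph automorphism of `Γ(2,n,t)` sending every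
vertex to a vertex in the other connected component. -/
theorem dihedral_tGraph_even_two_isomorphic_components (n t : ℕ) (hn : 2 ≤ n)
    (hteven : Even t) (ht : 2 ≤ t) (htub : t ≤ (n + 1) / 2) :
    Fintype.card (tGraph 2 n t).ConnectedComponent = 2 ∧
      ∃ e : tGraph 2 n t ≃g tGraph 2 n t,
        (∀ v : Fin 2 × Fin n, e v = (v.1 + 1, v.2)) ∧
        ∀ v : Fin 2 × Fin n,
          (tGraph 2 n t).connectedComponentMk (e v) ≠
            (tGraph 2 n t).connectedComponentMk v :=
  dihedral_tGraph_even_two_isomorphic_components_general n t hteven ht htub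
end

section
/- Let n ≥ 5 be odd and set t = (n+1)/2. If t is odd, then the t-graph Γ(2,n,t) of the dihedral group D_n is isomorphic to the cycle graph on 2n vertices (a cycle of even length). -/
/-!
Encode the vertex `(i, j)` as the residue `j + n i` modulo `2n`. Because `n = t + (t - 1)`, a step
of `±t` modulo `2n` is either a column jump of `t` inside a row or a change of row (adding `n`)
together with a column jump of `∓(t - 1)`; these are exactly the edges of `Γ(2,n,t)`, which is
therefore the circulant graph on `ℤ/2n` with jump `t`. As `t` is odd and coprime to `2t - 1`, it
is a unit modulo `2n`, and multiplication by it carries the cycle (jump `1`) onto this graph.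
-/

open Fin.NatCast

namespace SimpleGraph

def circulantGraphCongr {G H : Type*} [AddGroup G] [AddGroup H] (φ : G ≃+ H) (s : Set G) :
    circulantGraph s ≃g circulantGraph (φ '' s) where
  toEquiv := φ.toEquiv
  map_rel_iff' := by simp [← map_sub, φ.injective.eq_iff]

theorem cycleGraph_eq_circulantGraph_of_neZero (N : ℕ) [NeZero N] :
    cycleGraph N = circulantGraph {1} := by
  obtain ⟨m, rfl⟩ := Nat.exists_eq_succ_of_ne_zero (NeZero.ne N)
  exact cycleGraph_eq_circulantGraph m

theorem nonempty_circulantGraph_natCast_iso_cycleGraph {N t : ℕ} [NeZero N] (h : N.Coprime t) :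
    Nonempty (circulantGraph {(t : Fin N)} ≃g cycleGraph N) := by
  have hbij : Function.Bijective (nsmulAddMonoidHom t : Fin N →+ Fin N) := by
    rw [← Fintype.card_fin N, ← Nat.card_eq_fintype_card] at h
    exact h.nsmul_right_bijective
  let φ := AddEquiv.ofBijective _ hbij
  have himage : φ '' {1} = {(t : Fin N)} := by simp [φ]
  rw [cycleGraph_eq_circulantGraph_of_neZero, ← himage]
  exact ⟨(circulantGraphCongr φ {1}).symm⟩

end SimpleGraph

open SimpleGraph

theorem Nat.coprime_of_add_one_eq_mul {n t k : ℕ} (h : n + 1 = k * t) : n.Coprime t :=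
  have h' : (n : ℤ) + 1 = k * t := by exact_mod_cast h
  Nat.isCoprime_iff_coprime.mp ⟨-1, k, by linear_combination -h'⟩

theorem tGraph_two_adj_iff_circulantGraph_adj {n t : ℕ} [NeZero n] (h : n + 1 = 2 * t)
    (x y : Fin 2 × Fin n) :
    (tGraph 2 n t).Adj x y ↔
      (circulantGraph {(t : Fin (2 * n))}).Adj (finProdFinEquiv x) (finProdFinEquiv y) := by
  have ht : t % (2 * n) = t := Nat.mod_eq_of_lt (by have := NeZero.pos n; omega)
  obtain ⟨⟨i, hi⟩, ⟨j, hj⟩⟩ := x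
  obtain ⟨⟨k, hk⟩, ⟨l, hl⟩⟩ := y
  interval_cases i <;> interval_cases k <;>
  simp only [tGraph, circulantGraph_adj, Set.mem_singleton_iff, sub_eq_iff_eq_add, Ne,
    Prod.ext_iff, Fin.ext_iff, Fin.val_add_eq_ite, Fin.val_natCast, ht, finProdFinEquiv_apply_val,
    abs_eq_max_neg, zero_ne_one, one_ne_zero, false_and, not_false_eq_true, true_and] <;>
  split_ifs <;> omega

def tGraphTwoIsoCirculantGraph {n t : ℕ} [NeZero n] (h : n + 1 = 2 * t) :
    tGraph 2 n t ≃g circulantGraph {(t : Fin (2 * n))} where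
  toEquiv := finProdFinEquiv
  map_rel_iff' := (tGraph_two_adj_iff_circulantGraph_adj h _ _).symm

theorem dihedral_tGraph_iso_cycle_general (n t : ℕ) (hnodd : Odd n)
    (ht : t = (n + 1) / 2) (htodd : Odd t) :
    Nonempty (tGraph 2 n t ≃g SimpleGraph.cycleGraph (2 * n)) := by
  have hnt : n + 1 = 2 * t := by
    obtain ⟨c, rfl⟩ := hnodd
    omega
  have : NeZero n := ⟨by have := htodd.pos; omega⟩
  have hcop : (2 * n).Coprime t :=
    Nat.Coprime.mul_left (Nat.coprime_two_left.mpr htodd) (Nat.coprime_of_add_one_eq_mul hnt)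
  obtain ⟨e⟩ := nonempty_circulantGraph_natCast_iso_cycleGraph hcop
  exact ⟨(tGraphTwoIsoCirculantGraph hnt).trans e⟩

/-- For odd `n ≥ 5` and `t = (n+1)/2` odd, the `t`-graph `Γ(2,n,t)` of the dihedral group
`D_n` is isomorphic to the cycle graph on `2n` vertices (a cycle of even length). -/
theorem dihedral_tGraph_iso_cycle (n t : ℕ) (hn : 5 ≤ n) (hnodd : Odd n)
    (ht : t = (n + 1) / 2) (htodd : Odd t) :
    Nonempty (tGraph 2 n t ≃g SimpleGraph.cycleGraph (2 * n)) :=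
  dihedral_tGraph_iso_cycle_general n t hnodd ht htodd
end

section
/- Let n ≥ 5 be odd and set t = (n+1)/2. If t is even, then the t-graph Γ(2,n,t) of the dihedral group D_n has exactly 2 connected components and its chromatic number is 3. -/
open SimpleGraph

section

variable {m n t : ℕ}

def vertexParity (v : Fin m × Fin n) : Fin 2 :=
  ⟨(v.1.val + v.2.val) % 2, Nat.mod_lt _ two_pos⟩

theorem vertexParity_eq_of_tGraph_adj (ht : Even t) {v w : Fin m × Fin n}
    (h : (tGraph m n t).Adj v w) : vertexParity v = vertexParity w := by
  obtain ⟨-, h⟩ := h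
  obtain ⟨k, rfl⟩ := ht
  simp only [vertexParity, Fin.ext_iff, abs_eq_max_neg] at h ⊢
  omega

theorem vertexParity_eq_of_tGraph_reachable (ht : Even t) {v w : Fin m × Fin n}
    (h : (tGraph m n t).Reachable v w) : vertexParity v = vertexParity w := by
  obtain ⟨p⟩ := h
  induction p with
  | nil => rfl
  | cons h _ ih => exact (vertexParity_eq_of_tGraph_adj ht h).trans ih

def vertexOfParity (e : Fin 2) (j : Fin n) : Fin 2 × Fin n :=
  (⟨(j.val + e.val) % 2, Nat.mod_lt _ two_pos⟩, j)

theorem vertexParity_vertexOfParity (e : Fin 2) (j : Fin n) :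
    vertexParity (vertexOfParity e j) = e := by
  ext
  simp only [vertexParity, vertexOfParity]
  omega

theorem vertexOfParity_vertexParity (v : Fin 2 × Fin n) :
    vertexOfParity (vertexParity v) v.2 = v := by
  ext
  · simp only [vertexParity, vertexOfParity]
    omega
  · rfl

theorem abs_sub_snd_of_tGraph_two_adj {v w : Fin 2 × Fin n} (h : (tGraph 2 n t).Adj v w) :
    |(v.2 : ℤ) - w.2| = t ∨ |(v.2 : ℤ) - w.2| = t - 1 := by
  obtain ⟨-, h⟩ := h
  have := v.1.isLt
  have := w.1.isLt
  rw [abs_eq_max_neg (a := (v.1 : ℤ) - w.1)] at h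
  omega

theorem cycleGraph_adj_add_self (hnt : n + 1 = 2 * t) (hn : 2 ≤ n) {i j : Fin n}
    (h : |(i : ℤ) - j| = t ∨ |(i : ℤ) - j| = t - 1) : (cycleGraph n).Adj (i + i) (j + j) := by
  rw [cycleGraph_adj']
  have := Fin.coe_int_sub_eq_ite (i + i) (j + j)
  have := Fin.coe_int_sub_eq_ite (j + j) (i + i)
  have := Fin.coe_int_add_eq_ite i i
  have := Fin.coe_int_add_eq_ite j j
  simp only [Fin.le_iff_val_le_val, abs_eq_max_neg] at *
  split_ifs at * <;> omega

def tGraphToCycle (hnt : n + 1 = 2 * t) (hn : 2 ≤ n) : tGraph 2 n t →g cycleGraph n where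
  toFun v := v.2 + v.2
  map_rel' h := cycleGraph_adj_add_self hnt hn (abs_sub_snd_of_tGraph_two_adj h)

theorem tGraph_adj_vertexOfParity (hnt : n + 1 = 2 * t) (ht : Even t) (e : Fin 2)
    {j j' : Fin n} (h : (j' : ℕ) = j + t ∨ (j' : ℕ) + n = j + t) :
    (tGraph 2 n t).Adj (vertexOfParity e j) (vertexOfParity e j') := by
  obtain ⟨k, rfl⟩ := ht
  have := e.isLt
  refine ⟨fun hjj' => ?_, ?_⟩
  · have := congrArg (fun v => (v.2 : ℕ)) hjj'
    simp only [vertexOfParity] at this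
    omega
  · simp only [vertexOfParity, abs_eq_max_neg]
    omega

open Fin.CommRing

variable [NeZero n]

def cycleToTGraph (hnt : n + 1 = 2 * t) (ht : Even t) (e : Fin 2) :
    cycleGraph n →g tGraph 2 n t where
  toFun p := vertexOfParity e (t * p)
  map_rel' {p q} h := by
    obtain ⟨m, rfl⟩ : ∃ m, n = m + 2 := ⟨n - 2, by obtain ⟨k, rfl⟩ := ht; omega⟩
    have step (j : Fin (m + 2)) :
        (tGraph 2 (m + 2) t).Adj (vertexOfParity e j) (vertexOfParity e (j + t)) := by
      refine tGraph_adj_vertexOfParity hnt ht e ?_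
      rw [Fin.val_add_eq_ite, Fin.val_natCast, Nat.mod_eq_of_lt (by omega)]
      split_ifs <;> omega
    rcases cycleGraph_adj.mp h with h | h
    · rw [sub_eq_iff_eq_add'.mp h, mul_add, mul_one]
      exact (step _).symm
    · rw [sub_eq_iff_eq_add'.mp h, mul_add, mul_one]
      exact step _

theorem natCast_mul_add_self (hnt : n + 1 = 2 * t) (j : Fin n) : (t : Fin n) * (j + j) = j :=
  calc (t : Fin n) * (j + j) = ((2 * t : ℕ) : Fin n) * j := by push_cast; ring
    _ = j := by rw [← hnt]; push_cast; rw [Fin.natCast_self, zero_add, one_mul]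

theorem cycleToTGraph_tGraphToCycle (hnt : n + 1 = 2 * t) (hn : 2 ≤ n) (ht : Even t)
    (v : Fin 2 × Fin n) : cycleToTGraph hnt ht (vertexParity v) (tGraphToCycle hnt hn v) = v := by
  simp only [cycleToTGraph, tGraphToCycle, RelHom.coeFn_mk, natCast_mul_add_self hnt]
  exact vertexOfParity_vertexParity v

theorem tGraph_reachable_of_vertexParity_eq (hnt : n + 1 = 2 * t) (hn : 2 ≤ n) (ht : Even t)
    {v w : Fin 2 × Fin n} (h : vertexParity v = vertexParity w) : (tGraph 2 n t).Reachable v w := by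
  rw [← cycleToTGraph_tGraphToCycle hnt hn ht v, ← cycleToTGraph_tGraphToCycle hnt hn ht w, h]
  exact (cycleGraph_preconnected _ _).map _

def tGraphConnectedComponentEquiv (hnt : n + 1 = 2 * t) (hn : 2 ≤ n) (ht : Even t) :
    (tGraph 2 n t).ConnectedComponent ≃ Fin 2 where
  toFun := ConnectedComponent.lift vertexParity
    fun _ _ p _ => vertexParity_eq_of_tGraph_reachable ht p.reachable
  invFun e := (tGraph 2 n t).connectedComponentMk (vertexOfParity e 0)
  left_inv c := c.ind fun _ => ConnectedComponent.sound <|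
    tGraph_reachable_of_vertexParity_eq hnt hn ht (vertexParity_vertexOfParity _ _)
  right_inv e := vertexParity_vertexOfParity e 0

theorem chromaticNumber_tGraph_eq_cycleGraph (hnt : n + 1 = 2 * t) (hn : 2 ≤ n) (ht : Even t) :
    (tGraph 2 n t).chromaticNumber = (cycleGraph n).chromaticNumber :=
  le_antisymm (chromaticNumber_mono_of_hom (tGraphToCycle hnt hn))
    (chromaticNumber_mono_of_hom (cycleToTGraph hnt ht 0))

end

/-- For odd `n ≥ 5` and `t = (n+1)/2` even, the `t`-graph `Γ(2,n,t)` of the dihedral group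
`D_n` has exactly 2 connected components and chromatic number 3. -/
theorem dihedral_tGraph_two_components_chromatic_three (n t : ℕ) (hn : 5 ≤ n)
    (hnodd : Odd n) (ht : t = (n + 1) / 2) (hteven : Even t) :
    Fintype.card (tGraph 2 n t).ConnectedComponent = 2 ∧
      (tGraph 2 n t).chromaticNumber = 3 := by
  have hnt : n + 1 = 2 * t := by obtain ⟨k, rfl⟩ := hnodd; omega
  have : NeZero n := ⟨by omega⟩
  constructor
  · rw [Fintype.card_congr (tGraphConnectedComponentEquiv hnt (by omega) hteven),
      Fintype.card_fin]
  · rw [chromaticNumber_tGraph_eq_cycleGraph hnt (by omega) hteven,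
      chromaticNumber_cycleGraph_of_odd n (by omega) hnodd]
end
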